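/- arXiv:1603.02783 — 6 statements merged into one kernel-verified Lean document; each statement's English description precedes it below -/
import Mathlib

section
/- Under the reflection law of the coin billiard at a boundary point with sinθ ≠ 0, the outgoing angular velocity satisfies θ̇₊ = (1/(1+cos²θ))·(θ̇ sin²θ − 2√(2E − 2g|sinθ| − θ̇²)·cosθ·sgn(sinθ)), provided the incoming vertical velocity is ẏ = −√(2E − 2g|sinθ| − θ̇²); moreover θ̇₊² ≤ 2E − 2g|sinθ| whenever θ̇² ≤ 2E − 2g|sinθ|. -/
/-!
The outgoing velocity `θp` is the first component of `R (θd, ẏ)`, where `ẏ = -√(K - θd²)` and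
`R = (1 + cos²θ)⁻¹ [[sin²θ, 2σ cos θ], [2σ cos θ, -sin²θ]]`, `σ = sin θ / |sin θ|`, is the
reflection. The rows of `R` have norm `√(sin⁴θ + 4σ²cos²θ) / (1 + cos²θ) ≤ 1`, an equality when
`σ² = 1` because `sin⁴θ + 4cos²θ = (1 + cos²θ)²`, so by Cauchy–Schwarz `θp² ≤ θd² + ẏ² = K`.
-/

open Real

lemma sq_div_abs_le_one (x : ℝ) : (x / |x|) ^ 2 ≤ 1 := by
  rcases eq_or_ne x 0 with rfl | hx
  · simp
  · rw [div_pow, sq_abs, div_self (pow_ne_zero 2 hx)]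

lemma sq_mul_add_mul_div_le {a b p q r : ℝ} (h : p ^ 2 + q ^ 2 ≤ r ^ 2) :
    ((a * p + b * q) / r) ^ 2 ≤ a ^ 2 + b ^ 2 := by
  rcases eq_or_ne r 0 with rfl | hr
  · rw [div_zero, zero_pow two_ne_zero]
    positivity
  rw [div_pow, div_le_iff₀ (by positivity)]
  calc (a * p + b * q) ^ 2 ≤ (a ^ 2 + b ^ 2) * (p ^ 2 + q ^ 2) := by
        nlinarith [sq_nonneg (a * q - b * p)]
    _ ≤ (a ^ 2 + b ^ 2) * r ^ 2 := by gcongr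

lemma sq_sin_sq_add_sq_two_mul_cos_mul_le (θ σ : ℝ) (hσ : σ ^ 2 ≤ 1) :
    (sin θ ^ 2) ^ 2 + (2 * cos θ * σ) ^ 2 ≤ (1 + cos θ ^ 2) ^ 2 := by
  have hsin : sin θ ^ 2 = 1 - cos θ ^ 2 := by linarith [sin_sq_add_cos_sq θ]
  rw [hsin]
  nlinarith [mul_le_mul_of_nonneg_left hσ (sq_nonneg (2 * cos θ))]

theorem coin_reflection_velocity_bound_general (E g θ θd θp : ℝ)
    (hθd : θd ^ 2 ≤ 2 * E - 2 * g * |Real.sin θ|)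
    (hθp : θp = (1 / (1 + Real.cos θ ^ 2)) *
      (θd * Real.sin θ ^ 2 -
        2 * Real.sqrt (2 * E - 2 * g * |Real.sin θ| - θd ^ 2) * Real.cos θ *
          (Real.sin θ / |Real.sin θ|))) :
    θp ^ 2 ≤ 2 * E - 2 * g * |Real.sin θ| := by
  set K := 2 * E - 2 * g * |sin θ|
  set ydot := -√(K - θd ^ 2)
  have hK : K = θd ^ 2 + ydot ^ 2 := by
    rw [neg_sq, sq_sqrt (by linarith)]
    ring
  have hθp' : θp = (θd * sin θ ^ 2 + ydot * (2 * cos θ * (sin θ / |sin θ|))) /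
      (1 + cos θ ^ 2) := by
    rw [hθp]
    ring
  rw [hθp', hK]
  exact sq_mul_add_mul_div_le
    (sq_sin_sq_add_sq_two_mul_cos_mul_le θ _ (sq_div_abs_le_one (sin θ)))

theorem coin_reflection_velocity_bound (E g θ θd θp : ℝ) (hE : 0 < E) (hg : 0 < g)
    (hsin : Real.sin θ ≠ 0)
    (hθd : θd ^ 2 ≤ 2 * E - 2 * g * |Real.sin θ|)
    (hθp : θp = (1 / (1 + Real.cos θ ^ 2)) *
      (θd * Real.sin θ ^ 2 -
        2 * Real.sqrt (2 * E - 2 * g * |Real.sin θ| - θd ^ 2) * Real.cos θ *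
          (Real.sin θ / |Real.sin θ|))) :
    θp ^ 2 ≤ 2 * E - 2 * g * |Real.sin θ| :=
  coin_reflection_velocity_bound_general E g θ θd θp hθd hθp
end

section
/- For the point a = (θᵃ, θ̇ᵃ) = (π/2 − k/E, √2 k/√E) with k bounded between positive constants, the post-reflection angular velocity θ̇₊ᵃ = (1/(1+sin²(k/E)))·((1 − sin²(k/E))·√2k/√E − 2 sin(k/E)·√(2E − 2g cos(k/E) − 2k²/E)) satisfies θ̇₊ᵃ = −√2 k/√E + O(k/E^{3/2}) as E → ∞; in particular |θ̇₊ᵃ + √2 k/√E| ≤ C k / E^{3/2} for some constant C and all sufficiently large E. -/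
/-!
Write `E = t ^ 2` and `x = k / t ^ 2`, so that `√2 k / √E = x · √(2 t ^ 2)`. Adding this term to the
reflected velocity gives `2 / (1 + sin² x) · (x √(2 t ^ 2) - sin x · √Q)`, where `Q` is the energy
term under the root. Both defects are small: `|x - sin x| ≤ |x|³ / 6`, and since `2 t ^ 2 - Q`
is bounded by `2 (|g| + k₂²)`, `|√(2 t ^ 2) - √Q| = O(1 / t)`. Hence the sum is `O(k / t ^ 3)`.
-/

open Real

lemma abs_sub_le_abs_sq_sub_div {a b : ℝ} (ha : 0 < a) (hb : 0 ≤ b) :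
    |a - b| ≤ |a ^ 2 - b ^ 2| / a := by
  rw [le_div_iff₀ ha, show a ^ 2 - b ^ 2 = (a - b) * (a + b) by ring, abs_mul,
    abs_of_pos (by positivity : 0 < a + b)]
  gcongr
  linarith

lemma abs_mul_sub_sin_mul_le (x : ℝ) {a b : ℝ} (ha : 0 < a) (hb : 0 ≤ b) :
    |x * a - sin x * b| ≤ |x| ^ 3 / 6 * a + |x| * (|a ^ 2 - b ^ 2| / a) := by
  calc |x * a - sin x * b| = |(x - sin x) * a + sin x * (a - b)| := by ring_nf
    _ ≤ |x - sin x| * a + |sin x| * |a - b| := by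
        grw [abs_add_le, abs_mul, abs_mul, abs_of_pos ha]
    _ ≤ |x| ^ 3 / 6 * a + |x| * (|a ^ 2 - b ^ 2| / a) := by
        gcongr ?_ * _ + ?_ * ?_
        · exact abs_sub_sin_le x
        · exact abs_sin_le_abs
        · exact abs_sub_le_abs_sq_sub_div ha hb

lemma abs_reflect_add_le (s v w : ℝ) :
    |1 / (1 + s ^ 2) * ((1 - s ^ 2) * v - 2 * s * w) + v| ≤ 2 * |v - s * w| := by
  have hid : 1 / (1 + s ^ 2) * ((1 - s ^ 2) * v - 2 * s * w) + v
      = 2 / (1 + s ^ 2) * (v - s * w) := by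
    field_simp
    ring
  rw [hid, abs_mul, abs_of_pos (by positivity : (0:ℝ) < 2 / (1 + s ^ 2))]
  gcongr
  exact div_le_self zero_le_two (by nlinarith [sq_nonneg s])

lemma sq_rpow_three_halves {t : ℝ} (ht : 0 ≤ t) : (t ^ 2) ^ ((3 : ℝ) / 2) = t ^ 3 := by
  rw [← rpow_natCast, ← rpow_mul ht]
  norm_num

lemma sq_div_sq_le {k K t : ℝ} (hk : 0 ≤ k) (hkK : k ≤ K) (ht : 1 ≤ t) :
    k ^ 2 / t ^ 2 ≤ K ^ 2 :=
  (div_le_self (sq_nonneg k) (one_le_pow₀ ht)).trans (pow_le_pow_left₀ hk hkK 2)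

lemma abs_potential_le (g x : ℝ) {k K t : ℝ} (hk : 0 ≤ k) (hkK : k ≤ K) (ht : 1 ≤ t) :
    |2 * g * cos x + 2 * k ^ 2 / t ^ 2| ≤ 2 * (|g| + K ^ 2) := by
  have hcos : |g * cos x| ≤ |g| := by
    rw [abs_mul]
    exact mul_le_of_le_one_right (abs_nonneg g) (abs_cos_le_one x)
  have hkt : |k ^ 2 / t ^ 2| ≤ K ^ 2 := by
    rw [abs_of_nonneg (by positivity)]
    exact sq_div_sq_le hk hkK ht
  calc |2 * g * cos x + 2 * k ^ 2 / t ^ 2| = |2 * (g * cos x + k ^ 2 / t ^ 2)| := by ring_nf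
    _ ≤ 2 * (|g| + K ^ 2) := by
        rw [abs_mul, abs_two]
        gcongr
        exact (abs_add_le _ _).trans (add_le_add hcos hkt)

lemma reflection_error_le (G k K t : ℝ) (hG : 0 ≤ G) (hk : 0 < k) (hkK : k ≤ K) (ht : 1 ≤ t) :
    2 * ((k / t ^ 2) ^ 3 / 6 * (√2 * t) + k / t ^ 2 * (2 * (G + K ^ 2) / (√2 * t)))
      ≤ 4 * (G + K ^ 2 + 1) * k / t ^ 3 := by
  have h2 : √2 ^ 2 = 2 := sq_sqrt zero_le_two
  have hs : √2 ≤ 3 / 2 := by nlinarith [sqrt_nonneg 2]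
  have hid : 2 * ((k / t ^ 2) ^ 3 / 6 * (√2 * t) + k / t ^ 2 * (2 * (G + K ^ 2) / (√2 * t)))
      = k / t ^ 3 * (√2 * (k ^ 2 / t ^ 2) / 3 + 2 * √2 * (G + K ^ 2)) := by
    field_simp
    linear_combination (-36 * t ^ 2 * (G + K ^ 2)) * h2
  have hkt := sq_div_sq_le hk.le hkK ht
  calc _ = k / t ^ 3 * (√2 * (k ^ 2 / t ^ 2) / 3 + 2 * √2 * (G + K ^ 2)) := hid
    _ ≤ k / t ^ 3 * (4 * (G + K ^ 2 + 1)) := by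
        gcongr
        nlinarith [sqrt_nonneg 2, sq_nonneg K]
    _ = 4 * (G + K ^ 2 + 1) * k / t ^ 3 := by ring

theorem corner_reflection_asymptotics_general (g k₁ k₂ : ℝ) (hk₁ : 0 < k₁) :
    ∃ C > 0, ∃ E₀ : ℝ, ∀ E ≥ E₀, ∀ k, k₁ ≤ k → k ≤ k₂ →
      |(1 / (1 + Real.sin (k / E) ^ 2)) *
          ((1 - Real.sin (k / E) ^ 2) * (Real.sqrt 2 * k / Real.sqrt E) -
            2 * Real.sin (k / E) *
              Real.sqrt (2 * E - 2 * g * Real.cos (k / E) - 2 * k ^ 2 / E)) +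
        Real.sqrt 2 * k / Real.sqrt E| ≤ C * k / E ^ ((3 : ℝ) / 2) := by
  refine ⟨4 * (|g| + k₂ ^ 2 + 1), by positivity, |g| + k₂ ^ 2 + 1, ?_⟩
  intro E hE k hk₁k hkk₂
  have hk : 0 < k := hk₁.trans_le hk₁k
  have hE1 : 1 ≤ E := by linarith [abs_nonneg g, sq_nonneg k₂]
  obtain ⟨t, ht, rfl⟩ : ∃ t > 0, E = t ^ 2 :=
    ⟨√E, sqrt_pos.2 (by linarith), (sq_sqrt (by linarith)).symm⟩
  have ht1 : 1 ≤ t := by nlinarith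
  set x := k / t ^ 2 with hx
  set Q := 2 * t ^ 2 - 2 * g * cos x - 2 * k ^ 2 / t ^ 2
  have hgap := abs_potential_le g x hk.le hkk₂ ht1
  have hQ : 0 ≤ Q := by linarith [le_abs_self (2 * g * cos x + 2 * k ^ 2 / t ^ 2)]
  have hsq : (√2 * t) ^ 2 - √Q ^ 2 = 2 * g * cos x + 2 * k ^ 2 / t ^ 2 := by
    rw [mul_pow, sq_sqrt zero_le_two, sq_sqrt hQ]
    ring
  have hv : √2 * k / √(t ^ 2) = x * (√2 * t) := by
    rw [sqrt_sq ht.le, hx]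
    field_simp
  rw [hv, sq_rpow_three_halves ht.le]
  calc _ ≤ 2 * |x * (√2 * t) - sin x * √Q| := abs_reflect_add_le _ _ _
    _ ≤ 2 * (|x| ^ 3 / 6 * (√2 * t) + |x| * (|(√2 * t) ^ 2 - √Q ^ 2| / (√2 * t))) := by
        gcongr
        exact abs_mul_sub_sin_mul_le x (by positivity) (sqrt_nonneg Q)
    _ ≤ 2 * (x ^ 3 / 6 * (√2 * t) + x * (2 * (|g| + k₂ ^ 2) / (√2 * t))) := by
        rw [hsq, abs_of_pos (by positivity : 0 < x)]
        gcongr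
    _ ≤ 4 * (|g| + k₂ ^ 2 + 1) * k / t ^ 3 :=
        reflection_error_le |g| k k₂ t (by positivity) hk hkk₂ ht1

theorem corner_reflection_asymptotics (g k₁ k₂ : ℝ) (hg : 0 < g) (hk₁ : 0 < k₁)
    (hk : k₁ ≤ k₂) :
    ∃ C > 0, ∃ E₀ : ℝ, ∀ E ≥ E₀, ∀ k, k₁ ≤ k → k ≤ k₂ →
      |(1 / (1 + Real.sin (k / E) ^ 2)) *
          ((1 - Real.sin (k / E) ^ 2) * (Real.sqrt 2 * k / Real.sqrt E) -
            2 * Real.sin (k / E) *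
              Real.sqrt (2 * E - 2 * g * Real.cos (k / E) - 2 * k ^ 2 / E)) +
        Real.sqrt 2 * k / Real.sqrt E| ≤ C * k / E ^ ((3 : ℝ) / 2) :=
  corner_reflection_asymptotics_general g k₁ k₂ hk₁
end

section
/- Every function h : [X₀, X₁] → [Y₀, Y₁] that is Lipschitz with constant μ_h, and every function v : [Y₀, Y₁] → [X₀, X₁] that is Lipschitz with constant μ_v, with 0 ≤ μ_h·μ_v < 1, have graphs intersecting in exactly one point: there is a unique (X, Y) ∈ [X₀,X₁]×[Y₀,Y₁] with Y = h(X) and X = v(Y). -/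
/-!
On `[X₀, X₁]` the map `v ∘ h` is a self-map with Lipschitz constant `μv μh < 1`, so by the Banach
fixed-point theorem it has exactly one fixed point `x` there; the intersection points of the two
graphs are exactly the pairs `(x, h x)` with `x` such a fixed point.
-/

open Set Function NNReal

theorem Real.toNNReal_mul_toNNReal_lt_one {a b : ℝ} (hab : a * b < 1) :
    a.toNNReal * b.toNNReal < 1 := by
  rcases le_total 0 a with ha | ha
  · rwa [← Real.toNNReal_mul ha, Real.toNNReal_lt_one]
  · simp [Real.toNNReal_of_nonpos ha]

theorem LipschitzOnWith.existsUnique_isFixedPt {α : Type*} [MetricSpace α] {K : ℝ≥0}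
    {f : α → α} {s : Set α} (hf : LipschitzOnWith K f s) (hK : K < 1) (hsc : IsComplete s)
    (hs : s.Nonempty) (hsf : MapsTo f s s) : ∃! x, x ∈ s ∧ IsFixedPt f x := by
  have hcontr : ContractingWith K (hsf.restrict f s s) := ⟨hK, fun x y ↦ hf x.2 y.2⟩
  obtain ⟨x₀, hx₀⟩ := hs
  obtain ⟨x, hx, hfix, -⟩ := hcontr.exists_fixedPoint' hsc hsf hx₀ (edist_ne_top _ _)
  refine ⟨x, ⟨hx, hfix⟩, fun y ⟨hy, hyfix⟩ ↦ ?_⟩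
  exact congrArg Subtype.val <|
    hcontr.fixedPoint_unique' (x := ⟨y, hy⟩) (y := ⟨x, hx⟩) (Subtype.ext hyfix) (Subtype.ext hfix)

theorem existsUnique_mem_graph_inter_of_isFixedPt_comp {α β : Type*} {h : α → β} {v : β → α}
    {s : Set α} {t : Set β} (hh : MapsTo h s t) (hfix : ∃! x, x ∈ s ∧ IsFixedPt (v ∘ h) x) :
    ∃! p : α × β, p ∈ s ×ˢ t ∧ p.2 = h p.1 ∧ p.1 = v p.2 := by
  obtain ⟨x, ⟨hx, hvhx⟩, huniq⟩ := hfix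
  refine ⟨(x, h x), ⟨⟨hx, hh hx⟩, rfl, hvhx.symm⟩, ?_⟩
  rintro ⟨x', y'⟩ ⟨⟨hx', -⟩, hy' : y' = h x', hv : x' = v y'⟩
  subst hy'
  rw [huniq x' ⟨hx', hv.symm⟩]

theorem horizontal_vertical_curve_intersection_general (X₀ X₁ Y₀ Y₁ μh μv : ℝ)
    (hX : X₀ ≤ X₁) (h : ℝ → ℝ) (v : ℝ → ℝ)
    (hmaps : ∀ x ∈ Set.Icc X₀ X₁, h x ∈ Set.Icc Y₀ Y₁)
    (vmaps : ∀ y ∈ Set.Icc Y₀ Y₁, v y ∈ Set.Icc X₀ X₁)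
    (hlip : ∀ x ∈ Set.Icc X₀ X₁, ∀ x' ∈ Set.Icc X₀ X₁, |h x - h x'| ≤ μh * |x - x'|)
    (vlip : ∀ y ∈ Set.Icc Y₀ Y₁, ∀ y' ∈ Set.Icc Y₀ Y₁, |v y - v y'| ≤ μv * |y - y'|)
    (hμ : μh * μv < 1) :
    ∃! p : ℝ × ℝ, p ∈ Set.Icc X₀ X₁ ×ˢ Set.Icc Y₀ Y₁ ∧ p.2 = h p.1 ∧ p.1 = v p.2 := by
  have hvh : LipschitzOnWith (μv.toNNReal * μh.toNNReal) (v ∘ h) (Icc X₀ X₁) :=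
    (LipschitzOnWith.of_dist_le' vlip).comp (LipschitzOnWith.of_dist_le' hlip) hmaps
  refine existsUnique_mem_graph_inter_of_isFixedPt_comp hmaps ?_
  exact hvh.existsUnique_isFixedPt (Real.toNNReal_mul_toNNReal_lt_one (by rwa [mul_comm]))
    isClosed_Icc.isComplete (nonempty_Icc.2 hX) (MapsTo.comp vmaps hmaps)

theorem horizontal_vertical_curve_intersection (X₀ X₁ Y₀ Y₁ μh μv : ℝ)
    (hX : X₀ ≤ X₁) (hY : Y₀ ≤ Y₁) (h : ℝ → ℝ) (v : ℝ → ℝ)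
    (hmaps : ∀ x ∈ Set.Icc X₀ X₁, h x ∈ Set.Icc Y₀ Y₁)
    (vmaps : ∀ y ∈ Set.Icc Y₀ Y₁, v y ∈ Set.Icc X₀ X₁)
    (hlip : ∀ x ∈ Set.Icc X₀ X₁, ∀ x' ∈ Set.Icc X₀ X₁, |h x - h x'| ≤ μh * |x - x'|)
    (vlip : ∀ y ∈ Set.Icc Y₀ Y₁, ∀ y' ∈ Set.Icc Y₀ Y₁, |v y - v y'| ≤ μv * |y - y'|)
    (hμh : 0 ≤ μh) (hμv : 0 ≤ μv) (hμ : μh * μv < 1) :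
    ∃! p : ℝ × ℝ, p ∈ Set.Icc X₀ X₁ ×ˢ Set.Icc Y₀ Y₁ ∧ p.2 = h p.1 ∧ p.1 = v p.2 :=
  horizontal_vertical_curve_intersection_general X₀ X₁ Y₀ Y₁ μh μv hX h v hmaps vmaps hlip vlip hμ
end

section
/- Let (H_n) be a nested decreasing sequence of nonempty μ_h-horizontal strips in D = [X₀,X₁]×[Y₀,Y₁] whose widths d(H_n) tend to 0. Then the intersection ⋂ₙ H_n is a μ_h-horizontal curve, i.e., the graph of a μ_h-Lipschitz function h : [X₀,X₁] → [Y₀,Y₁]. -/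
/-!
The boundaries of nested strips interleave: every lower graph `h₁ m` lies below every upper
graph `h₂ n`. Hence `h := ⨆ n, h₁ n` is squeezed between all of them, and since the widths tend
to `0`, a point lies in every strip exactly when it lies on the graph of `h`. Moreover `h` is a
uniform limit of the `μ`-Lipschitz functions `h₂ n`, so it is `μ`-Lipschitz itself.
-/

open Set

theorem abs_sub_le_mul_dist_of_forall_approx {α : Type*} [PseudoMetricSpace α] {s : Set α}
    {h : α → ℝ} {K : ℝ}
    (happrox : ∀ ε > 0, ∃ φ : α → ℝ,
      (∀ x ∈ s, ∀ y ∈ s, |φ x - φ y| ≤ K * dist x y) ∧ ∀ x ∈ s, |h x - φ x| ≤ ε)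
    {x y : α} (hx : x ∈ s) (hy : y ∈ s) : |h x - h y| ≤ K * dist x y := by
  refine le_of_forall_pos_le_add fun ε hε => ?_
  obtain ⟨φ, hφ, hhφ⟩ := happrox (ε / 2) (half_pos hε)
  obtain ⟨hx₁, hx₂⟩ := abs_le.1 (hhφ x hx)
  obtain ⟨hy₁, hy₂⟩ := abs_le.1 (hhφ y hy)
  obtain ⟨hxy₁, hxy₂⟩ := abs_le.1 (hφ x hx y hy)
  rw [abs_le]
  constructor <;> linarith

theorem eq_of_forall_mem_Icc_of_width_le {a b : ℕ → ℝ} {y z : ℝ}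
    (hy : ∀ n, y ∈ Icc (a n) (b n)) (hz : ∀ n, z ∈ Icc (a n) (b n))
    (hwidth : ∀ ε > 0, ∃ n, b n - a n ≤ ε) : y = z := by
  refine eq_of_forall_dist_le fun ε hε => ?_
  obtain ⟨n, hn⟩ := hwidth ε hε
  obtain ⟨⟨hay, hyb⟩, ⟨haz, hzb⟩⟩ := And.intro (hy n) (hz n)
  rw [Real.dist_eq, abs_sub_le_iff]
  constructor <;> linarith

section NestedStrips

variable {α : Type*} {s : Set α} {f g : ℕ → α → ℝ}

def strip (s : Set α) (f g : α → ℝ) : Set (α × ℝ) :=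
  {p | p.1 ∈ s ∧ f p.1 ≤ p.2 ∧ p.2 ≤ g p.1}

theorem lower_le_upper_of_antitone_strip (hfg : ∀ n, ∀ x ∈ s, f n x ≤ g n x)
    (hanti : Antitone fun n => strip s (f n) (g n)) (m n : ℕ) {x : α} (hx : x ∈ s) :
    f m x ≤ g n x := by
  have hlower : ∀ k, (x, f k x) ∈ strip s (f k) (g k) := fun k => ⟨hx, le_rfl, hfg k x hx⟩
  rcases le_total m n with hmn | hnm
  · exact (hanti hmn (hlower n)).2.1.trans (hfg n x hx)
  · exact (hanti hnm (hlower m)).2.2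

variable (hle : ∀ m n, ∀ x ∈ s, f m x ≤ g n x)
include hle

theorem le_iSup_lower (n : ℕ) {x : α} (hx : x ∈ s) : f n x ≤ ⨆ m, f m x :=
  le_ciSup ⟨g 0 x, by rintro _ ⟨m, rfl⟩; exact hle m 0 x hx⟩ n

theorem iSup_lower_le (n : ℕ) {x : α} (hx : x ∈ s) : ⨆ m, f m x ≤ g n x :=
  ciSup_le fun m => hle m n x hx

theorem iInter_strip_eq_graph_iSup (hwidth : ∀ x ∈ s, ∀ ε > 0, ∃ n, g n x - f n x ≤ ε) :
    ⋂ n, strip s (f n) (g n) = {p | p.1 ∈ s ∧ p.2 = ⨆ n, f n p.1} := by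
  have hsup : ∀ {x}, x ∈ s → ∀ n, (⨆ m, f m x) ∈ Icc (f n x) (g n x) := fun hx n =>
    ⟨le_iSup_lower hle n hx, iSup_lower_le hle n hx⟩
  ext ⟨x, y⟩
  simp only [strip, mem_iInter, mem_ofPred_eq]
  constructor
  · intro hp
    have hx : x ∈ s := (hp 0).1
    exact ⟨hx, eq_of_forall_mem_Icc_of_width_le (fun n => (hp n).2) (hsup hx) (hwidth x hx)⟩
  · rintro ⟨hx, rfl⟩ n
    exact ⟨hx, hsup hx n⟩

theorem abs_iSup_lower_sub_upper_le (n : ℕ) {x : α} (hx : x ∈ s) :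
    |(⨆ m, f m x) - g n x| ≤ g n x - f n x := by
  rw [abs_sub_comm, abs_of_nonneg (sub_nonneg.2 (iSup_lower_le hle n hx))]
  linarith [le_iSup_lower hle n hx]

end NestedStrips

theorem nested_horizontal_strips_limit_general (X₀ X₁ Y₀ Y₁ μh : ℝ)
    (h₁ h₂ : ℕ → ℝ → ℝ)
    (hmaps : ∀ n, ∀ x ∈ Set.Icc X₀ X₁,
      h₁ n x ∈ Set.Icc Y₀ Y₁ ∧ h₂ n x ∈ Set.Icc Y₀ Y₁ ∧ h₁ n x ≤ h₂ n x)
    (hlip : ∀ n, ∀ x ∈ Set.Icc X₀ X₁, ∀ x' ∈ Set.Icc X₀ X₁,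
      |h₁ n x - h₁ n x'| ≤ μh * |x - x'| ∧ |h₂ n x - h₂ n x'| ≤ μh * |x - x'|)
    (hnested : ∀ n,
      {p : ℝ × ℝ | p.1 ∈ Set.Icc X₀ X₁ ∧ h₁ (n + 1) p.1 ≤ p.2 ∧ p.2 ≤ h₂ (n + 1) p.1} ⊆
      {p : ℝ × ℝ | p.1 ∈ Set.Icc X₀ X₁ ∧ h₁ n p.1 ≤ p.2 ∧ p.2 ≤ h₂ n p.1})
    (hwidth : ∀ ε > 0, ∃ N, ∀ n ≥ N, ∀ x ∈ Set.Icc X₀ X₁, h₂ n x - h₁ n x ≤ ε) :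
    ∃ h : ℝ → ℝ,
      (∀ x ∈ Set.Icc X₀ X₁, h x ∈ Set.Icc Y₀ Y₁) ∧
      (∀ x ∈ Set.Icc X₀ X₁, ∀ x' ∈ Set.Icc X₀ X₁, |h x - h x'| ≤ μh * |x - x'|) ∧
      (⋂ n, {p : ℝ × ℝ | p.1 ∈ Set.Icc X₀ X₁ ∧ h₁ n p.1 ≤ p.2 ∧ p.2 ≤ h₂ n p.1}) =
        {p : ℝ × ℝ | p.1 ∈ Set.Icc X₀ X₁ ∧ p.2 = h p.1} := by
  have hle := lower_le_upper_of_antitone_strip (fun n x hx => (hmaps n x hx).2.2)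
    (antitone_nat_of_succ_le hnested)
  have huniform : ∀ ε > 0, ∃ n, ∀ x ∈ Icc X₀ X₁, h₂ n x - h₁ n x ≤ ε := fun ε hε =>
    (hwidth ε hε).imp fun N hN => hN N le_rfl
  refine ⟨fun x => ⨆ n, h₁ n x, fun x hx => ⟨?_, ?_⟩, fun x hx x' hx' => ?_,
    iInter_strip_eq_graph_iSup hle fun x hx ε hε => (huniform ε hε).imp fun n hn => hn x hx⟩
  · exact (hmaps 0 x hx).1.1.trans (le_iSup_lower hle 0 hx)
  · exact ciSup_le fun n => (hmaps n x hx).1.2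
  · rw [← Real.dist_eq x]
    refine abs_sub_le_mul_dist_of_forall_approx (h := fun x => ⨆ n, h₁ n x)
      (fun ε hε => ?_) hx hx'
    obtain ⟨n, hn⟩ := huniform ε hε
    refine ⟨h₂ n, fun y hy z hz => ?_,
      fun y hy => (abs_iSup_lower_sub_upper_le hle n hy).trans (hn y hy)⟩
    simpa only [Real.dist_eq] using (hlip n y hy z hz).2

theorem nested_horizontal_strips_limit (X₀ X₁ Y₀ Y₁ μh : ℝ)
    (hX : X₀ ≤ X₁) (hY : Y₀ ≤ Y₁) (hμh : 0 ≤ μh)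
    (h₁ h₂ : ℕ → ℝ → ℝ)
    (hmaps : ∀ n, ∀ x ∈ Set.Icc X₀ X₁,
      h₁ n x ∈ Set.Icc Y₀ Y₁ ∧ h₂ n x ∈ Set.Icc Y₀ Y₁ ∧ h₁ n x ≤ h₂ n x)
    (hlip : ∀ n, ∀ x ∈ Set.Icc X₀ X₁, ∀ x' ∈ Set.Icc X₀ X₁,
      |h₁ n x - h₁ n x'| ≤ μh * |x - x'| ∧ |h₂ n x - h₂ n x'| ≤ μh * |x - x'|)
    (hnested : ∀ n,
      {p : ℝ × ℝ | p.1 ∈ Set.Icc X₀ X₁ ∧ h₁ (n + 1) p.1 ≤ p.2 ∧ p.2 ≤ h₂ (n + 1) p.1} ⊆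
      {p : ℝ × ℝ | p.1 ∈ Set.Icc X₀ X₁ ∧ h₁ n p.1 ≤ p.2 ∧ p.2 ≤ h₂ n p.1})
    (hwidth : ∀ ε > 0, ∃ N, ∀ n ≥ N, ∀ x ∈ Set.Icc X₀ X₁, h₂ n x - h₁ n x ≤ ε) :
    ∃ h : ℝ → ℝ,
      (∀ x ∈ Set.Icc X₀ X₁, h x ∈ Set.Icc Y₀ Y₁) ∧
      (∀ x ∈ Set.Icc X₀ X₁, ∀ x' ∈ Set.Icc X₀ X₁, |h x - h x'| ≤ μh * |x - x'|) ∧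
      (⋂ n, {p : ℝ × ℝ | p.1 ∈ Set.Icc X₀ X₁ ∧ h₁ n p.1 ≤ p.2 ∧ p.2 ≤ h₂ n p.1}) =
        {p : ℝ × ℝ | p.1 ∈ Set.Icc X₀ X₁ ∧ p.2 = h p.1} :=
  nested_horizontal_strips_limit_general X₀ X₁ Y₀ Y₁ μh h₁ h₂ hmaps hlip hnested hwidth
end

section
/- Let π : {L₁,L₂,L₃,R₁,R₂,R₃} → {L, R} send L₁,L₂,L₃ ↦ L and R₁,R₂,R₃ ↦ R. Then for every bi-infinite sequence t : ℤ → {L, R} there exists a sequence s ∈ Σ with π(s_i) = t_i for all i ∈ ℤ. -/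
/-- The six symbols of the coin subshift. -/
inductive CoinSym : Type
  | L1 | L2 | L3 | R1 | R2 | R3
  deriving DecidableEq

/-- The transition rule of the coin subshift. -/
def CoinSym.trans : CoinSym → CoinSym → Prop
  | .L1, b => b = .R1 ∨ b = .L2 ∨ b = .R3
  | .L2, b => b = .R1 ∨ b = .L2 ∨ b = .R3
  | .L3, b => b = .R1 ∨ b = .L2 ∨ b = .R3
  | .R1, b => b = .L1 ∨ b = .R2 ∨ b = .L3
  | .R2, b => b = .L1 ∨ b = .R2 ∨ b = .L3
  | .R3, b => b = .L1 ∨ b = .R2 ∨ b = .L3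

/-- The coin subshift of finite type. -/
def coinShift : Set (ℤ → CoinSym) := {s | ∀ i : ℤ, CoinSym.trans (s i) (s (i + 1))}

/-- The left shift map. -/
def shiftMap (s : ℤ → CoinSym) : ℤ → CoinSym := fun i => s (i + 1)

/-- Projection onto heads/tails: true for L-symbols, false for R-symbols. -/
def CoinSym.isL : CoinSym → Bool
  | .L1 | .L2 | .L3 => true
  | .R1 | .R2 | .R3 => false

def CoinSym.ofBits (prev cur : Bool) : CoinSym :=
  match prev, cur with
  | true, true => .L2
  | false, true => .L1
  | false, false => .R2
  | true, false => .R1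

theorem CoinSym.isL_ofBits (prev cur : Bool) : (CoinSym.ofBits prev cur).isL = cur := by
  cases prev <;> cases cur <;> rfl

theorem CoinSym.trans_ofBits (prev cur next : Bool) :
    CoinSym.trans (CoinSym.ofBits prev cur) (CoinSym.ofBits cur next) := by
  cases prev <;> cases cur <;> cases next <;> simp [CoinSym.ofBits, CoinSym.trans]

theorem every_LR_sequence_realized (t : ℤ → Bool) :
    ∃ s ∈ coinShift, ∀ i : ℤ, (s i).isL = t i := by
  refine ⟨fun i => CoinSym.ofBits (t (i - 1)) (t i), fun i => ?_, fun i => CoinSym.isL_ofBits _ _⟩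
  simpa only [add_sub_cancel_right] using CoinSym.trans_ofBits (t (i - 1)) (t i) (t (i + 1))
end

section
/- The 2×2 matrix J = [[a, b],[c, d]] with |a| ≥ A·E, |b| ≤ B√E, |c| ≤ B√E, |d| ≤ B (A, B > 0 fixed, E large) maps the horizontal cone {(x,y) : |y| ≤ μ|x|} with μ = C/√E into a horizontal cone {(x,y) : |y| ≤ μ′|x|} with μ′ = C′/√E for some constant C′ depending only on A, B, C, once E is sufficiently large. -/
/-! On the cone `|y| ≤ μ|x|` the first coordinate of `J (x, y)` has size at least
`(|a| - |b| μ) |x|` and the second at most `(|c| + |d| μ) |x|`, so the image lies in the cone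
of slope `(|c| + |d| μ) / (|a| - |b| μ)`. With `s = √E` and `μ = C / s` the numerator is
`O(s)` while the denominator is at least `A s² - B C ≥ A s² / 2`, which gives a slope `O(1 / s)`. -/

open Real

section Cone

variable {a b c d x y μ : ℝ}

lemma abs_mul_add_mul_le_of_abs_le (hy : |y| ≤ μ * |x|) :
    |c * x + d * y| ≤ (|c| + |d| * μ) * |x| :=
  calc |c * x + d * y| ≤ |c| * |x| + |d| * |y| := by
        simpa only [abs_mul] using abs_add_le (c * x) (d * y)
    _ ≤ |c| * |x| + |d| * (μ * |x|) := by gcongr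
    _ = (|c| + |d| * μ) * |x| := by ring

lemma le_abs_mul_add_mul_of_abs_le (hy : |y| ≤ μ * |x|) :
    (|a| - |b| * μ) * |x| ≤ |a * x + b * y| :=
  calc (|a| - |b| * μ) * |x| = |a| * |x| - |b| * (μ * |x|) := by ring
    _ ≤ |a| * |x| - |b| * |y| := by gcongr
    _ ≤ |a * x + b * y| := by
        simpa only [abs_mul, abs_neg, sub_neg_eq_add] using abs_sub_abs_le_abs_sub (a * x) (-(b * y))

lemma abs_le_mul_abs_of_abs_le {K : ℝ} (hK : 0 ≤ K) (hy : |y| ≤ μ * |x|)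
    (hslope : |c| + |d| * μ ≤ K * (|a| - |b| * μ)) :
    |c * x + d * y| ≤ K * |a * x + b * y| :=
  calc |c * x + d * y| ≤ (|c| + |d| * μ) * |x| := abs_mul_add_mul_le_of_abs_le hy
    _ ≤ K * (|a| - |b| * μ) * |x| := by gcongr
    _ ≤ K * |a * x + b * y| := by
        rw [mul_assoc]
        exact mul_le_mul_of_nonneg_left (le_abs_mul_add_mul_of_abs_le hy) hK

end Cone

lemma cone_slope_le {A B C s a b c d : ℝ} (hA : 0 < A) (hB : 0 < B) (hC : 0 < C)
    (hs : 1 ≤ s) (hsA : 2 * B * C / A ≤ s ^ 2)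
    (ha : A * s ^ 2 ≤ |a|) (hb : |b| ≤ B * s) (hc : |c| ≤ B * s) (hd : |d| ≤ B) :
    |c| + |d| * (C / s) ≤ 2 * B * (1 + C) / A / s * (|a| - |b| * (C / s)) := by
  have hs₀ : 0 < s := by linarith
  have hnum : |c| + |d| * (C / s) ≤ B * (1 + C) * s :=
    calc |c| + |d| * (C / s) ≤ B * s + B * (C / s) := by gcongr
      _ ≤ B * s + B * (C * s) := by
          gcongr
          rw [div_le_iff₀ hs₀, mul_assoc]
          exact le_mul_of_one_le_right hC.le (one_le_mul_of_one_le_of_one_le hs hs)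
      _ = B * (1 + C) * s := by ring
  have hden : A * s ^ 2 / 2 ≤ |a| - |b| * (C / s) :=
    calc A * s ^ 2 / 2 ≤ A * s ^ 2 - B * C := by
          rw [div_le_iff₀ hA] at hsA
          linarith
      _ ≤ |a| - B * s * (C / s) := by
          rw [mul_assoc B, mul_div_cancel₀ C hs₀.ne']
          linarith
      _ ≤ |a| - |b| * (C / s) := by gcongr
  calc |c| + |d| * (C / s) ≤ B * (1 + C) * s := hnum
    _ = 2 * B * (1 + C) / A / s * (A * s ^ 2 / 2) := by field_simp
    _ ≤ 2 * B * (1 + C) / A / s * (|a| - |b| * (C / s)) := by gcongr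

theorem cone_field_estimate (A B C : ℝ) (hA : 0 < A) (hB : 0 < B) (hC : 0 < C) :
    ∃ C' > 0, ∃ E₀ : ℝ, ∀ E ≥ E₀, ∀ a b c d : ℝ,
      A * E ≤ |a| → |b| ≤ B * Real.sqrt E → |c| ≤ B * Real.sqrt E → |d| ≤ B →
      ∀ x y : ℝ, |y| ≤ (C / Real.sqrt E) * |x| →
        |c * x + d * y| ≤ (C' / Real.sqrt E) * |a * x + b * y| := by
  refine ⟨2 * B * (1 + C) / A, by positivity, max 1 (2 * B * C / A), ?_⟩
  intro E hE a b c d ha hb hc hd x y hy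
  have hE₁ : 1 ≤ E := le_of_max_le_left hE
  have hsq : √E ^ 2 = E := sq_sqrt (by linarith)
  rw [← hsq] at ha hE
  exact abs_le_mul_abs_of_abs_le (by positivity) hy
    (cone_slope_le hA hB hC (one_le_sqrt.mpr hE₁) (le_of_max_le_right hE) ha hb hc hd)
end
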